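/- arXiv:1805.07196 — 2 statements merged into one kernel-verified Lean document; each statement's English description precedes it below -/
import Mathlib

section
/- Probabilistic Controllability and Observability Theorem: Let G be a PDES with controllable events Σc and observable events Σo, and let L be a probabilistic language with L ⊆ L_G. Then there exists a probabilistic P-supervisor S_p such that L_{S_p/G} = L if and only if L is probabilistic controllable w.r.t. L_G and Σc and probabilistic observable w.r.t. L_G, Σc and Σo. -/
open scoped BigOperators

noncomputable section

/-- Chain product: given step weights `w s σ` (interpreted as the conditional
probability of event `σ` after string `s`), `chainProd w pre rest` multiplies the
weights along `rest`, starting from the already-consumed prefix `pre`. -/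
def chainProd {E : Type*} (w : List E → E → ℝ) : List E → List E → ℝ
  | _, [] => 1
  | pre, σ :: rest => w pre σ * chainProd w (pre ++ [σ]) rest

/-- The (probabilistic) language generated by step weights `w`:
`langOf w [] = 1` and `langOf w (s ++ [σ]) = langOf w s * w s σ`. -/
def langOf {E : Type*} (w : List E → E → ℝ) : List E → ℝ := chainProd w []

/-- A probabilistic language over a finite event set `E`. -/
structure PLang (E : Type*) [Fintype E] where
  toFun : List E → ℝ
  nonneg : ∀ s, 0 ≤ toFun s
  le_one : ∀ s, toFun s ≤ 1
  eps : toFun [] = 1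
  step : ∀ s, (∑ σ : E, toFun (s ++ [σ])) ≤ toFun s

/-- `L1` is a probabilistic sublanguage of `L2`. -/
def PSub {E : Type*} (L1 L2 : List E → ℝ) : Prop :=
  (∀ s, 0 < L1 s → 0 < L2 s) ∧
  ∀ s, 0 < L1 s → ∀ σ : E, L1 (s ++ [σ]) / L1 s ≤ L2 (s ++ [σ]) / L2 s

/-- Intersection of probabilistic languages. -/
def pInter {E : Type*} (L1 L2 : List E → ℝ) : List E → ℝ :=
  langOf fun s σ => min (L1 (s ++ [σ]) / L1 s) (L2 (s ++ [σ]) / L2 s)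

/-- Natural projection erasing the events outside the observable set `So`. -/
def proj {E : Type*} [DecidableEq E] (So : Finset E) (s : List E) : List E :=
  s.filter fun σ => decide (σ ∈ So)

/-- A probabilistic discrete event system (probabilistic automaton). -/
structure PDES (X : Type*) (E : Type*) [Fintype E] where
  x0 : X
  trans : X → E → Option X
  prob : X → E → ℝ
  prob_nonneg : ∀ x σ, 0 ≤ prob x σ
  prob_le_one : ∀ x σ, prob x σ ≤ 1
  prob_pos_iff : ∀ x σ, 0 < prob x σ ↔ (trans x σ).isSome
  sum_le_one : ∀ x, (∑ σ : E, prob x σ) ≤ 1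

/-- Extension of the partial transition function to strings. -/
def PDES.transStar {X E : Type*} [Fintype E] (G : PDES X E) (s : List E) : Option X :=
  s.foldl (fun ox σ => ox.bind fun x => G.trans x σ) (some G.x0)

/-- Step weight of a PDES: `ρ(δ(x0,s),σ)` when `δ(x0,s)` is defined, `0` otherwise. -/
def PDES.w {X E : Type*} [Fintype E] (G : PDES X E) (s : List E) (σ : E) : ℝ :=
  (G.transStar s).elim 0 fun x => G.prob x σ

/-- The probabilistic language generated by a PDES. -/
def PDES.lang {X E : Type*} [Fintype E] (G : PDES X E) : List E → ℝ := langOf G.w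

/-- The set of control patterns: subsets of events containing every uncontrollable event. -/
def ControlPatterns {E : Type*} [Fintype E] [DecidableEq E] (Sc : Finset E) :
    Finset (Finset E) :=
  Finset.univ.filter fun θ => Scᶜ ⊆ θ

/-- `Sp` is a probabilistic P-supervisor for `G`: to every observation of a string in the
support of `L_G` it assigns a probability distribution on the control patterns. -/
def IsSupervisor {X E : Type*} [Fintype E] [DecidableEq E] (G : PDES X E)
    (Sc So : Finset E) (Sp : List E → Finset E → ℝ) : Prop :=
  ∀ s : List E, 0 < G.lang s →
    (∀ θ ∈ ControlPatterns Sc, 0 ≤ Sp (proj So s) θ) ∧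
    (∑ θ ∈ ControlPatterns Sc, Sp (proj So s) θ) = 1

/-- The controlled probabilistic language `L_{Sp/G}`. -/
def supLang {X E : Type*} [Fintype E] [DecidableEq E] (G : PDES X E)
    (Sc So : Finset E) (Sp : List E → Finset E → ℝ) : List E → ℝ :=
  langOf fun s σ =>
    G.w s σ * ∑ θ ∈ (ControlPatterns Sc).filter (fun θ => σ ∈ θ), Sp (proj So s) θ

/-- `K` is a scaling-factor function for `G`: on every observation of a string in the
support of `L_G` it takes values in `[0,1]` and equals `1` on uncontrollable events. -/
def IsScaling {X E : Type*} [Fintype E] [DecidableEq E] (G : PDES X E)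
    (Sc So : Finset E) (K : List E → E → ℝ) : Prop :=
  ∀ s : List E, 0 < G.lang s → ∀ σ : E,
    0 ≤ K (proj So s) σ ∧ K (proj So s) σ ≤ 1 ∧ (σ ∉ Sc → K (proj So s) σ = 1)

/-- The controlled probabilistic language `L_{K/G}`. -/
def kLang {X E : Type*} [Fintype E] [DecidableEq E] (G : PDES X E)
    (So : Finset E) (K : List E → E → ℝ) : List E → ℝ :=
  langOf fun s σ => G.w s σ * K (proj So s) σ

/-- Probabilistic controllability (language form). -/
def ProbControllable {E : Type*} (L M : List E → ℝ) (Sc : Finset E) : Prop :=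
  ∀ s : List E, 0 < L s → ∀ σ : E, σ ∉ Sc →
    L (s ++ [σ]) / L s = M (s ++ [σ]) / M s

/-- Probabilistic observability (language form). -/
def ProbObservable {E : Type*} [DecidableEq E] (L M : List E → ℝ)
    (Sc So : Finset E) : Prop :=
  ∀ s1 s2 : List E, 0 < L s1 → 0 < L s2 → proj So s1 = proj So s2 →
    ∀ σ ∈ Sc,
      (M (s1 ++ [σ]) / M s1) * (L (s2 ++ [σ]) / L s2) =
      (M (s2 ++ [σ]) / M s2) * (L (s1 ++ [σ]) / L s1)

/-- Probabilistic controllability (automata form). -/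
def AutControllable {X Q E : Type*} [Fintype E] (G : PDES X E) (H : PDES Q E)
    (Sc : Finset E) : Prop :=
  ∀ s : List E, 0 < H.lang s → ∀ x q,
    G.transStar s = some x → H.transStar s = some q →
    ∀ σ : E, σ ∉ Sc → H.prob q σ = G.prob x σ

/-- Probabilistic observability (automata form). -/
def AutObservable {X Q E : Type*} [Fintype E] [DecidableEq E] (G : PDES X E)
    (H : PDES Q E) (Sc So : Finset E) : Prop :=
  ∀ s1 s2 : List E, 0 < H.lang s1 → 0 < H.lang s2 → proj So s1 = proj So s2 →
    ∀ x1 q1 x2 q2,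
      G.transStar s1 = some x1 → H.transStar s1 = some q1 →
      G.transStar s2 = some x2 → H.transStar s2 = some q2 →
      ∀ σ ∈ Sc, G.prob x1 σ * H.prob q2 σ = G.prob x2 σ * H.prob q1 σ

/-- Reachability in the controllability-testing automaton `G_tc`.
States are pairs `(x,q)` (as `Sum.inl`) together with the special state `d` (`Sum.inr ()`). -/
inductive TcReach {X Q E : Type*} [Fintype E] (G : PDES X E) (H : PDES Q E)
    (Sc : Finset E) : (X × Q) ⊕ Unit → Prop
  | init : TcReach G H Sc (Sum.inl (G.x0, H.x0))
  | good (x q x' q' σ) : TcReach G H Sc (Sum.inl (x, q)) →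
      G.trans x σ = some x' → H.trans q σ = some q' →
      ((σ ∉ Sc ∧ G.prob x σ = H.prob q σ) ∨ σ ∈ Sc) →
      TcReach G H Sc (Sum.inl (x', q'))
  | bad (x q σ) : TcReach G H Sc (Sum.inl (x, q)) →
      σ ∉ Sc → G.prob x σ ≠ H.prob q σ →
      TcReach G H Sc (Sum.inr ())

/-- Reachability in the observability-testing automaton `G_to`.
States are 4-tuples `(x1,q1,x2,q2)` (as `Sum.inl`) together with the special state `d`. -/
inductive ToReach {X Q E : Type*} [Fintype E] (G : PDES X E) (H : PDES Q E)
    (Sc So : Finset E) : (X × Q × X × Q) ⊕ Unit → Prop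
  | init : ToReach G H Sc So (Sum.inl (G.x0, H.x0, G.x0, H.x0))
  | sync (x1 q1 x2 q2 x1' q1' x2' q2' σ) :
      ToReach G H Sc So (Sum.inl (x1, q1, x2, q2)) →
      G.trans x1 σ = some x1' → H.trans q1 σ = some q1' →
      G.trans x2 σ = some x2' → H.trans q2 σ = some q2' →
      (σ ∉ Sc ∨ (σ ∈ Sc ∧ G.prob x1 σ * H.prob q2 σ = G.prob x2 σ * H.prob q1 σ)) →
      ToReach G H Sc So (Sum.inl (x1', q1', x2', q2'))
  | bad (x1 q1 x2 q2 σ) :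
      ToReach G H Sc So (Sum.inl (x1, q1, x2, q2)) →
      σ ∈ Sc → G.prob x1 σ * H.prob q2 σ ≠ G.prob x2 σ * H.prob q1 σ →
      ToReach G H Sc So (Sum.inr ())
  | left (x1 q1 x2 q2 x1' q1' σ) :
      ToReach G H Sc So (Sum.inl (x1, q1, x2, q2)) → σ ∉ So →
      G.trans x1 σ = some x1' → H.trans q1 σ = some q1' →
      ToReach G H Sc So (Sum.inl (x1', q1', x2, q2))
  | right (x1 q1 x2 q2 x2' q2' σ) :
      ToReach G H Sc So (Sum.inl (x1, q1, x2, q2)) → σ ∉ So →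
      G.trans x2 σ = some x2' → H.trans q2 σ = some q2' →
      ToReach G H Sc So (Sum.inl (x1, q1, x2', q2'))

/-- `H` is a probabilistic subautomaton of `G`, as witnessed by the state inclusion `e`. -/
def SubautomatonVia {Q X E : Type*} [Fintype E] (H : PDES Q E) (G : PDES X E)
    (e : Q → X) : Prop :=
  Function.Injective e ∧ e H.x0 = G.x0 ∧
  ∀ q σ, H.prob q σ ≤ G.prob (e q) σ ∧
    ∀ q', H.trans q σ = some q' → G.trans (e q) σ = some (e q')

/-- The product of two PDESs. -/
def PDES.prod {X Q E : Type*} [Fintype E] (G : PDES X E) (H : PDES Q E) :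
    PDES (X × Q) E where
  x0 := (G.x0, H.x0)
  trans := fun p σ => (G.trans p.1 σ).bind fun x => (H.trans p.2 σ).map fun q => (x, q)
  prob := fun p σ => min (G.prob p.1 σ) (H.prob p.2 σ)
  prob_nonneg := fun p σ => le_min (G.prob_nonneg _ _) (H.prob_nonneg _ _)
  prob_le_one := fun p σ => le_trans (min_le_left _ _) (G.prob_le_one _ _)
  prob_pos_iff := by
    intro p σ
    rw [lt_min_iff, G.prob_pos_iff, H.prob_pos_iff]
    cases hG : G.trans p.1 σ <;> cases hH : H.trans p.2 σ <;> simp [hG, hH]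
  sum_le_one := fun p =>
    le_trans (Finset.sum_le_sum fun σ _ => min_le_left _ _) (G.sum_le_one p.1)

end

/-! The controlled language of a supervisor factorises as `L_G(sσ) / L_G(s)` times a scaling
factor `K(P(s), σ)`, the probability that the supervisor enables `σ` after observing `P(s)`.
A factor of this shape is `1` on uncontrollable events and depends on `s` only through `P(s)`,
which is what controllability and observability say about `L(sσ) / L(s)`. Conversely, from a
controllable and observable `L ⊆ L_G` one reads off such a factor, and any factor with values in
`[0,1]` is realised by the supervisor that enables every event independently with probability
`K(t, σ)`. -/

open Finset

section LangOf

variable {E : Type*} {w w' : List E → E → ℝ} {s : List E}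

theorem chainProd_append (w : List E → E → ℝ) (pre s t : List E) :
    chainProd w pre (s ++ t) = chainProd w pre s * chainProd w (pre ++ s) t := by
  induction s generalizing pre with
  | nil => simp [chainProd]
  | cons σ rest ih => simp [chainProd, ih, mul_assoc]

@[simp]
theorem langOf_nil (w : List E → E → ℝ) : langOf w [] = 1 := rfl

theorem langOf_snoc (w : List E → E → ℝ) (s : List E) (σ : E) :
    langOf w (s ++ [σ]) = langOf w s * w s σ := by
  simp [langOf, chainProd_append, chainProd]

theorem langOf_snoc_div (h : langOf w s ≠ 0) (σ : E) :
    langOf w (s ++ [σ]) / langOf w s = w s σ := by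
  rw [langOf_snoc, mul_div_cancel_left₀ _ h]

theorem langOf_nonneg (hw : ∀ s σ, 0 ≤ w s σ) (s : List E) : 0 ≤ langOf w s := by
  induction s using List.reverseRecOn with
  | nil => simp
  | append_singleton s σ ih => rw [langOf_snoc]; exact mul_nonneg ih (hw s σ)

theorem langOf_mul (w w' : List E → E → ℝ) (s : List E) :
    langOf (fun s σ => w s σ * w' s σ) s = langOf w s * langOf w' s := by
  induction s using List.reverseRecOn with
  | nil => simp
  | append_singleton s σ ih => simp only [langOf_snoc, ih]; ring

theorem langOf_congr (h : ∀ s σ, langOf w s ≠ 0 → w s σ = w' s σ) :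
    langOf w = langOf w' := by
  funext s
  induction s using List.reverseRecOn with
  | nil => simp
  | append_singleton s σ ih =>
    rw [langOf_snoc, langOf_snoc, ← ih]
    by_cases hs : langOf w s = 0
    · simp [hs]
    · rw [h s σ hs]

end LangOf

theorem PLang.snoc_le {E : Type*} [Fintype E] (L : PLang E) (s : List E) (σ : E) :
    L.toFun (s ++ [σ]) ≤ L.toFun s :=
  (single_le_sum (fun i _ => L.nonneg (s ++ [i])) (mem_univ σ)).trans (L.step s)

theorem PLang.langOf_div {E : Type*} [Fintype E] (L : PLang E) :
    langOf (fun s σ => L.toFun (s ++ [σ]) / L.toFun s) = L.toFun := by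
  funext s
  induction s using List.reverseRecOn with
  | nil => simp [L.eps]
  | append_singleton s σ ih =>
    rw [langOf_snoc, ih]
    by_cases hs : L.toFun s = 0
    · rw [hs, zero_mul]
      exact le_antisymm (L.nonneg _) (hs ▸ L.snoc_le s σ)
    · exact mul_div_cancel₀ _ hs

section PDES

variable {X E : Type*} [Fintype E] (G : PDES X E)

theorem PDES.w_nonneg (s : List E) (σ : E) : 0 ≤ G.w s σ := by
  unfold PDES.w
  cases G.transStar s with
  | none => simp
  | some x => exact G.prob_nonneg x σ

theorem PDES.lang_nonneg (s : List E) : 0 ≤ G.lang s :=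
  langOf_nonneg G.w_nonneg s

theorem PDES.lang_snoc_div {s : List E} (h : G.lang s ≠ 0) (σ : E) :
    G.lang (s ++ [σ]) / G.lang s = G.w s σ :=
  langOf_snoc_div h σ

variable [DecidableEq E]

theorem kLang_eq_lang_mul (So : Finset E) (K : List E → E → ℝ) (s : List E) :
    kLang G So K s = G.lang s * langOf (fun s σ => K (proj So s) σ) s :=
  langOf_mul _ _ s

theorem PDES.lang_pos_of_kLang_ne_zero {So : Finset E} {K : List E → E → ℝ} {s : List E}
    (h : kLang G So K s ≠ 0) : 0 < G.lang s := by
  rw [kLang_eq_lang_mul] at h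
  exact (G.lang_nonneg s).lt_of_ne' (left_ne_zero_of_mul h)

theorem probControllable_kLang {Sc So : Finset E} {K : List E → E → ℝ}
    (hK : IsScaling G Sc So K) : ProbControllable (kLang G So K) G.lang Sc := by
  intro s hs σ hσ
  have hG := G.lang_pos_of_kLang_ne_zero hs.ne'
  rw [kLang, langOf_snoc_div hs.ne', G.lang_snoc_div hG.ne', (hK s hG σ).2.2 hσ, mul_one]

theorem probObservable_kLang (Sc So : Finset E) (K : List E → E → ℝ) :
    ProbObservable (kLang G So K) G.lang Sc So := by
  intro s₁ s₂ h₁ h₂ hproj σ _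
  rw [kLang, langOf_snoc_div h₁.ne', langOf_snoc_div h₂.ne',
    G.lang_snoc_div (G.lang_pos_of_kLang_ne_zero h₁.ne').ne',
    G.lang_snoc_div (G.lang_pos_of_kLang_ne_zero h₂.ne').ne', hproj]
  ring

end PDES

section Supervisor

variable {E : Type*} [Fintype E] [DecidableEq E]

def patternMass (Sc : Finset E) (Sp : List E → Finset E → ℝ) (t : List E) (σ : E) : ℝ :=
  ∑ θ ∈ (ControlPatterns Sc).filter (fun θ => σ ∈ θ), Sp t θ

theorem mem_controlPatterns {Sc θ : Finset E} : θ ∈ ControlPatterns Sc ↔ Scᶜ ⊆ θ := by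
  simp [ControlPatterns]

theorem supLang_eq_kLang {X : Type*} (G : PDES X E) (Sc So : Finset E)
    (Sp : List E → Finset E → ℝ) : supLang G Sc So Sp = kLang G So (patternMass Sc Sp) :=
  rfl

theorem IsSupervisor.isScaling {X : Type*} {G : PDES X E} {Sc So : Finset E}
    {Sp : List E → Finset E → ℝ} (hSp : IsSupervisor G Sc So Sp) :
    IsScaling G Sc So (patternMass Sc Sp) := by
  intro s hs σ
  obtain ⟨hnonneg, hsum⟩ := hSp s hs
  refine ⟨sum_nonneg fun θ hθ => hnonneg θ (mem_filter.1 hθ).1, ?_, fun hσ => ?_⟩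
  · exact hsum ▸ sum_le_sum_of_subset_of_nonneg (filter_subset _ _)
      fun θ hθ _ => hnonneg θ hθ
  · have hall : (ControlPatterns Sc).filter (fun θ => σ ∈ θ) = ControlPatterns Sc :=
      filter_true_of_mem fun θ hθ => mem_controlPatterns.1 hθ (mem_compl.2 hσ)
    rw [patternMass, hall, hsum]

def bernoulliProduct (p : E → ℝ) (θ : Finset E) : ℝ :=
  (∏ i ∈ θ, p i) * ∏ i ∈ θᶜ, (1 - p i)

theorem bernoulliProduct_nonneg {p : E → ℝ} (hp : ∀ i, 0 ≤ p i ∧ p i ≤ 1) (θ : Finset E) :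
    0 ≤ bernoulliProduct p θ :=
  mul_nonneg (prod_nonneg fun i _ => (hp i).1) (prod_nonneg fun i _ => sub_nonneg.2 (hp i).2)

theorem sum_bernoulliProduct (p : E → ℝ) : ∑ θ, bernoulliProduct p θ = 1 := by
  simp [bernoulliProduct, ← Fintype.prod_add]

theorem sum_filter_mem_bernoulliProduct (p : E → ℝ) (σ : E) :
    ∑ θ ∈ univ.filter (fun θ => σ ∈ θ), bernoulliProduct p θ = p σ := by
  set q := Function.update (fun i => 1 - p i) σ 0
  -- replacing `1 - p σ` by `0` kills exactly the sets that miss `σ`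
  have hq : ∀ θ : Finset E, (∏ i ∈ θ, p i) * ∏ i ∈ θᶜ, q i
      = if σ ∈ θ then bernoulliProduct p θ else 0 := by
    intro θ
    split_ifs with hσ
    · refine congrArg _ (prod_congr rfl fun i hi => ?_)
      exact Function.update_of_ne (by rintro rfl; exact mem_compl.1 hi hσ) _ _
    · exact mul_eq_zero_of_right _ (prod_eq_zero (mem_compl.2 hσ) (by simp [q]))
  calc ∑ θ ∈ univ.filter (fun θ => σ ∈ θ), bernoulliProduct p θ
      = ∑ θ, (∏ i ∈ θ, p i) * ∏ i ∈ θᶜ, q i := by rw [sum_filter]; simp only [hq]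
    _ = ∏ i, (p i + q i) := (Fintype.prod_add _ _).symm
    _ = p σ := by
      rw [Fintype.prod_eq_single σ fun i hi => by simp [q, Function.update_of_ne hi]]
      simp [q]

variable {Sc : Finset E} {p : E → ℝ}

theorem bernoulliProduct_eq_zero_of_notMem_controlPatterns (hp : ∀ i ∉ Sc, p i = 1)
    {θ : Finset E} (hθ : θ ∉ ControlPatterns Sc) : bernoulliProduct p θ = 0 := by
  obtain ⟨i, hiSc, hiθ⟩ := not_subset.1 (mt mem_controlPatterns.2 hθ)
  exact mul_eq_zero_of_right _
    (prod_eq_zero (mem_compl.2 hiθ) (by rw [hp i (mem_compl.1 hiSc), sub_self]))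

theorem sum_controlPatterns_bernoulliProduct (hp : ∀ i ∉ Sc, p i = 1) :
    ∑ θ ∈ ControlPatterns Sc, bernoulliProduct p θ = 1 := by
  rw [sum_subset (subset_univ _) fun θ _ hθ =>
    bernoulliProduct_eq_zero_of_notMem_controlPatterns hp hθ]
  exact sum_bernoulliProduct p

theorem patternMass_bernoulliProduct {K : List E → E → ℝ} {t : List E}
    (hK : ∀ i ∉ Sc, K t i = 1) (σ : E) :
    patternMass Sc (fun t => bernoulliProduct (K t)) t σ = K t σ := by
  rw [patternMass, sum_subset (filter_subset_filter _ (subset_univ _)) fun θ hθ hθ' =>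
    bernoulliProduct_eq_zero_of_notMem_controlPatterns hK
      fun h => hθ' (mem_filter.2 ⟨h, (mem_filter.1 hθ).2⟩)]
  exact sum_filter_mem_bernoulliProduct (K t) σ

variable {X : Type*} {G : PDES X E} {So : Finset E} {K : List E → E → ℝ}

theorem isSupervisor_bernoulliProduct (hK : IsScaling G Sc So K) :
    IsSupervisor G Sc So fun t => bernoulliProduct (K t) := fun s hs =>
  ⟨fun θ _ => bernoulliProduct_nonneg (fun σ => ⟨(hK s hs σ).1, (hK s hs σ).2.1⟩) θ,
    sum_controlPatterns_bernoulliProduct fun σ => (hK s hs σ).2.2⟩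

theorem supLang_bernoulliProduct (hK : IsScaling G Sc So K) :
    supLang G Sc So (fun t => bernoulliProduct (K t)) = kLang G So K := by
  rw [supLang_eq_kLang]
  refine langOf_congr fun s σ hs => ?_
  have hG := G.lang_pos_of_kLang_ne_zero hs
  exact congrArg _ (patternMass_bernoulliProduct (fun σ => (hK s hG σ).2.2) σ)

theorem exists_supervisor_iff_exists_scaling (G : PDES X E) (Sc So : Finset E)
    (L : List E → ℝ) :
    (∃ Sp, IsSupervisor G Sc So Sp ∧ supLang G Sc So Sp = L) ↔
      ∃ K, IsScaling G Sc So K ∧ kLang G So K = L :=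
  ⟨fun ⟨Sp, hSp, hL⟩ => ⟨_, hSp.isScaling, (supLang_eq_kLang G Sc So Sp).symm.trans hL⟩,
    fun ⟨_, hK, hL⟩ =>
      ⟨_, isSupervisor_bernoulliProduct hK, (supLang_bernoulliProduct hK).trans hL⟩⟩

end Supervisor

theorem PSub.div_le_w {X E : Type*} [Fintype E] {G : PDES X E} {L : List E → ℝ}
    (hsub : PSub L G.lang) {s : List E} (hs : 0 < L s) (σ : E) :
    L (s ++ [σ]) / L s ≤ G.w s σ :=
  G.lang_snoc_div (hsub.1 s hs).ne' σ ▸ hsub.2 s hs σ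

section Converse

variable {X E : Type*} [Fintype E] [DecidableEq E] {G : PDES X E} {Sc So : Finset E}
  {L : PLang E}

open Classical in
/-- Any string of the support of `L` with observation `t` after which `σ` is possible yields
the factor; by observability the choice does not matter. -/
noncomputable def scalingFactor (G : PDES X E) (Sc So : Finset E) (L : PLang E) (t : List E)
    (σ : E) : ℝ :=
  if h : σ ∈ Sc ∧ ∃ s, 0 < L.toFun s ∧ proj So s = t ∧ 0 < G.w s σ then
    L.toFun (h.2.choose ++ [σ]) / L.toFun h.2.choose / G.w h.2.choose σ
  else 1

theorem isScaling_scalingFactor (hsub : PSub L.toFun G.lang) :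
    IsScaling G Sc So (scalingFactor G Sc So L) := by
  intro s _ σ
  unfold scalingFactor
  split_ifs with h
  · obtain ⟨hs, -, hw⟩ := h.2.choose_spec
    exact ⟨div_nonneg (div_nonneg (L.nonneg _) hs.le) hw.le,
      (div_le_one hw).2 (hsub.div_le_w hs σ), fun hσ => absurd h.1 hσ⟩
  · exact ⟨zero_le_one, le_rfl, fun _ => rfl⟩

theorem div_eq_w_mul_scalingFactor (hsub : PSub L.toFun G.lang)
    (hc : ProbControllable L.toFun G.lang Sc) (ho : ProbObservable L.toFun G.lang Sc So)
    {s : List E} (hs : 0 < L.toFun s) (σ : E) :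
    L.toFun (s ++ [σ]) / L.toFun s = G.w s σ * scalingFactor G Sc So L (proj So s) σ := by
  have hG : ∀ {s}, 0 < L.toFun s → G.lang s ≠ 0 := fun hs => (hsub.1 _ hs).ne'
  by_cases hσ : σ ∈ Sc
  · rcases (G.w_nonneg s σ).eq_or_lt with hw | hw
    · rw [← hw, zero_mul]
      exact le_antisymm (hw ▸ hsub.div_le_w hs σ) (div_nonneg (L.nonneg _) hs.le)
    · have h : σ ∈ Sc ∧ ∃ s', 0 < L.toFun s' ∧ proj So s' = proj So s ∧ 0 < G.w s' σ :=
        ⟨hσ, s, hs, rfl, hw⟩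
      obtain ⟨hs', hproj, hw'⟩ := h.2.choose_spec
      have hobs := ho _ s hs' hs hproj σ hσ
      rw [G.lang_snoc_div (hG hs'), G.lang_snoc_div (hG hs)] at hobs
      rw [scalingFactor, dif_pos h, mul_div_assoc', eq_div_iff hw'.ne', ← hobs]
      ring
  · rw [scalingFactor, dif_neg (fun h => hσ h.1), mul_one, hc s hs σ hσ,
      G.lang_snoc_div (hG hs)]

theorem kLang_scalingFactor (hsub : PSub L.toFun G.lang)
    (hc : ProbControllable L.toFun G.lang Sc) (ho : ProbObservable L.toFun G.lang Sc So) :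
    kLang G So (scalingFactor G Sc So L) = L.toFun :=
  calc kLang G So (scalingFactor G Sc So L)
      = langOf (fun s σ => L.toFun (s ++ [σ]) / L.toFun s) := by
        refine (langOf_congr fun s σ hs => ?_).symm
        rw [L.langOf_div] at hs
        exact div_eq_w_mul_scalingFactor hsub hc ho ((L.nonneg s).lt_of_ne' hs) σ
    _ = L.toFun := L.langOf_div

end Converse

/-- Probabilistic Controllability and Observability Theorem. -/
theorem supervisor_exists_iff_controllable_observable {X E : Type*} [Fintype E]
    [DecidableEq E] (G : PDES X E) (Sc So : Finset E) (L : PLang E)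
    (hsub : PSub L.toFun G.lang) :
    (∃ Sp : List E → Finset E → ℝ,
        IsSupervisor G Sc So Sp ∧ supLang G Sc So Sp = L.toFun) ↔
    (ProbControllable L.toFun G.lang Sc ∧ ProbObservable L.toFun G.lang Sc So) := by
  rw [exists_supervisor_iff_exists_scaling]
  constructor
  · rintro ⟨K, hK, hL⟩
    rw [← hL]
    exact ⟨probControllable_kLang G hK, probObservable_kLang G Sc So K⟩
  · rintro ⟨hc, ho⟩
    exact ⟨_, isScaling_scalingFactor hsub, kLang_scalingFactor hsub hc ho⟩
end

section
/- Let L, R and M be probabilistic languages over Σ with L ⊆ R ⊆ M. If R is probabilistic controllable w.r.t. M and Σc and probabilistic observable w.r.t. M, Σc and Σo, then supp(R) is a prefix-closed ordinary language satisfying supp(L) ⊆ supp(R) ⊆ supp(M) which is controllable w.r.t. supp(M) and Σc and observable w.r.t. supp(M), Σc and Σo; that is, R ∈ PCO(L) implies supp(R) ∈ CO(supp(L)). -/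
open scoped BigOperators

/-!
A probabilistic language is nonincreasing along extensions, so its support is prefix-closed.
The defining identities of probabilistic controllability and observability equate ratios of
conditional probabilities; when one side is positive so is the other, and positivity of the
ratio `R(sσ)/R(s)` is exactly membership of `sσ` in `supp(R)`.
-/

namespace PLang

variable {E : Type*} [Fintype E] (P : PLang E)

theorem apply_append_singleton_le (s : List E) (σ : E) :
    P.toFun (s ++ [σ]) ≤ P.toFun s :=
  (Finset.single_le_sum (f := fun τ => P.toFun (s ++ [τ]))
    (fun _ _ => P.nonneg _) (Finset.mem_univ σ)).trans (P.step s)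

theorem apply_append_le (s t : List E) : P.toFun (s ++ t) ≤ P.toFun s := by
  induction t using List.reverseRecOn with
  | nil => simp
  | append_singleton t σ ih =>
    rw [← List.append_assoc]
    exact (P.apply_append_singleton_le _ σ).trans ih

theorem pos_of_pos_append (s t : List E) (h : 0 < P.toFun (s ++ t)) : 0 < P.toFun s :=
  h.trans_le (P.apply_append_le s t)

end PLang

section Support

variable {E : Type*} {L M : List E → ℝ}

theorem ProbControllable.pos_append {Sc : Finset E} (hc : ProbControllable L M Sc)
    {s : List E} (hLs : 0 < L s) (hMs : 0 < M s) {σ : E} (hσ : σ ∉ Sc)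
    (hM : 0 < M (s ++ [σ])) : 0 < L (s ++ [σ]) := by
  rw [← div_pos_iff_of_pos_right hLs, hc s hLs σ hσ]
  exact div_pos hM hMs

theorem ProbObservable.pos_append [DecidableEq E] {Sc So : Finset E}
    (ho : ProbObservable L M Sc So) {s1 s2 : List E} (hL1 : 0 < L s1) (hL2 : 0 < L s2)
    (hp : proj So s1 = proj So s2) {σ : E} (hσ : σ ∈ Sc) (hL1σ : 0 < L (s1 ++ [σ]))
    (hM2 : 0 < M s2) (hM2σ : 0 < M (s2 ++ [σ])) (hL2σ : 0 ≤ L (s2 ++ [σ])) :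
    0 < L (s2 ++ [σ]) := by
  have hpos : 0 < M (s2 ++ [σ]) / M s2 * (L (s1 ++ [σ]) / L s1) := by positivity
  rw [← ho s1 s2 hL1 hL2 hp σ hσ] at hpos
  refine hL2σ.lt_of_ne fun h => ?_
  simp [← h] at hpos

end Support

/-- `R ∈ PCO(L)` implies `supp(R) ∈ CO(supp(L))`: the support of a
probabilistic controllable and observable superlanguage is a prefix-closed ordinary
language between `supp(L)` and `supp(M)` that is controllable and observable. -/
theorem pco_mem_supp_co {E : Type*} [Fintype E] [DecidableEq E]
    (L R M : PLang E) (Sc So : Finset E)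
    (hLR : PSub L.toFun R.toFun) (hRM : PSub R.toFun M.toFun)
    (hc : ProbControllable R.toFun M.toFun Sc)
    (ho : ProbObservable R.toFun M.toFun Sc So) :
    (∀ s t : List E, 0 < R.toFun (s ++ t) → 0 < R.toFun s) ∧
    (∀ s : List E, 0 < L.toFun s → 0 < R.toFun s) ∧
    (∀ s : List E, 0 < R.toFun s → 0 < M.toFun s) ∧
    (∀ s : List E, 0 < R.toFun s → ∀ σ : E, σ ∉ Sc →
        0 < M.toFun (s ++ [σ]) → 0 < R.toFun (s ++ [σ])) ∧
    (∀ s1 s2 : List E, 0 < R.toFun s1 → 0 < R.toFun s2 →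
        proj So s1 = proj So s2 → ∀ σ ∈ Sc,
          0 < R.toFun (s1 ++ [σ]) → 0 < M.toFun (s2 ++ [σ]) →
          0 < R.toFun (s2 ++ [σ])) :=
  ⟨R.pos_of_pos_append, hLR.1, hRM.1,
    fun _ hRs _ hσ hM => hc.pos_append hRs (hRM.1 _ hRs) hσ hM,
    fun _ _ hR1 hR2 hp _ hσ hR1σ hM2σ =>
      ho.pos_append hR1 hR2 hp hσ hR1σ (hRM.1 _ hR2) hM2σ (R.nonneg _)⟩
end
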